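/- Let n ≥ 5, Z_n(x,y,z,a) be the 4-perturbed reciprocal matrix with x,y,z,a > 0, and w its Perron eigenvector. If max{y,a} ≤ 1 then w_{n-1} ≥ w_3, so for every 3 ≤ i ≤ n-2 the edge (n-1,i) is in G_{Z_n(x,y,z,a),w}. -/
import Mathlib


/-- The reciprocal matrix `Z_n(x,y,z,a)`: all entries equal to one except
(in 1-based indexing) `(1,n-1) = y`, `(1,n) = x`, `(2,n-1) = a`, `(2,n) = z`
and the reciprocals at the transposed positions. -/
noncomputable def Zmat (n : ℕ) (x y z a : ℝ) : Matrix (Fin n) (Fin n) ℝ :=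
  fun i j =>
    if i.val = 0 ∧ j.val = n - 2 then y
    else if i.val = 0 ∧ j.val = n - 1 then x
    else if i.val = 1 ∧ j.val = n - 2 then a
    else if i.val = 1 ∧ j.val = n - 1 then z
    else if i.val = n - 2 ∧ j.val = 0 then y⁻¹
    else if i.val = n - 1 ∧ j.val = 0 then x⁻¹
    else if i.val = n - 2 ∧ j.val = 1 then a⁻¹
    else if i.val = n - 1 ∧ j.val = 1 then z⁻¹
    else 1

/-- if `max {y, a} ≤ 1` then `w_{n-1} ≥ w_3`, so for every
`3 ≤ i ≤ n-2` the edge (n-1,i) is in `G_{Z_n(x,y,z,a),w}`. -/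
theorem zmat_edge_nsub1_middle (n : ℕ) (hn : 5 ≤ n) (x y z a : ℝ)
    (hx : 0 < x) (hy : 0 < y) (hz : 0 < z) (ha : 0 < a)
    (r : ℝ) (w : Fin n → ℝ) (hw : ∀ i, 0 < w i)
    (heig : (Zmat n x y z a).mulVec w = r • w)
    (hy1 : y ≤ 1) (ha1 : a ≤ 1) :
    w ⟨2, by omega⟩ ≤ w ⟨n - 2, by omega⟩ ∧
      ∀ (i : ℕ) (_hi3 : 3 ≤ i) (_hin : i ≤ n - 2), w ⟨i - 1, by omega⟩ ≤ w ⟨n - 2, by omega⟩ := by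
  have hSpos : 0 < ∑ j, w j :=
    Finset.sum_pos (fun i _ => hw i) ⟨⟨0, by omega⟩, Finset.mem_univ _⟩
  -- middle rows are all ones
  have hmid : ∀ i : Fin n, i.val ≠ 0 → i.val ≠ 1 → i.val ≠ n - 2 → i.val ≠ n - 1 →
      r * w i = ∑ j, w j := by
    intro i h0 h1 h2 h3
    have h := congrFun heig i
    simp only [Matrix.mulVec, dotProduct, Pi.smul_apply, smul_eq_mul] at h
    rw [← h]
    refine Finset.sum_congr rfl fun j _ => ?_
    simp [Zmat, h0, h1, h2, h3]
  have h2 : r * w ⟨2, by omega⟩ = ∑ j, w j := by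
    apply hmid <;> simp <;> omega
  have hr : 0 < r := by nlinarith [hw ⟨2, by omega⟩]
  -- row n-2
  have i0 : Fin n := ⟨0, by omega⟩
  have he : r * w ⟨n - 2, by omega⟩
      = (y⁻¹ - 1) * w ⟨0, by omega⟩ + (a⁻¹ - 1) * w ⟨1, by omega⟩ + ∑ j, w j := by
    have h := congrFun heig ⟨n - 2, by omega⟩
    simp only [Matrix.mulVec, dotProduct, Pi.smul_apply, smul_eq_mul] at h
    rw [← h]
    have hsplit : ∀ j : Fin n, Zmat n x y z a ⟨n - 2, by omega⟩ j * w j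
        = (Zmat n x y z a ⟨n - 2, by omega⟩ j * w j - w j) + w j := by intro j; ring
    rw [Finset.sum_congr rfl fun j _ => hsplit j, Finset.sum_add_distrib]
    congr 1
    have hsub : (Finset.univ : Finset (Fin n)) ⊇ {(⟨0, by omega⟩ : Fin n), ⟨1, by omega⟩} := by
      intro j _; exact Finset.mem_univ j
    rw [← Finset.sum_subset hsub]
    · rw [Finset.sum_pair (by simp)]
      have hA : n - 2 ≠ 0 := by omega
      have hB : n - 2 ≠ 1 := by omega
      have hC : n - 2 ≠ n - 1 := by omega
      have e0 : Zmat n x y z a ⟨n - 2, by omega⟩ ⟨0, by omega⟩ = y⁻¹ := by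
        simp [Zmat, hA, hB, hC]
      have e1 : Zmat n x y z a ⟨n - 2, by omega⟩ ⟨1, by omega⟩ = a⁻¹ := by
        simp [Zmat, hA, hB, hC]
      rw [e0, e1]; ring
    · intro j _ hj
      have hj0 : j.val ≠ 0 := by
        intro h; apply hj; simp [Fin.ext_iff, h]
      have hj1 : j.val ≠ 1 := by
        intro h; apply hj; simp [Fin.ext_iff, h]
      have hA : n - 2 ≠ 0 := by omega
      have hB : n - 2 ≠ 1 := by omega
      have hC : n - 2 ≠ n - 1 := by omega
      have : Zmat n x y z a ⟨n - 2, by omega⟩ j = 1 := by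
        simp [Zmat, hA, hB, hC, hj0, hj1]
      rw [this]; ring
  have hy' : (1 : ℝ) ≤ y⁻¹ := (one_le_inv₀ hy).2 hy1
  have ha' : (1 : ℝ) ≤ a⁻¹ := (one_le_inv₀ ha).2 ha1
  have hkey : w ⟨2, by omega⟩ ≤ w ⟨n - 2, by omega⟩ := by
    nlinarith [hw ⟨0, by omega⟩, hw ⟨1, by omega⟩]
  refine ⟨hkey, fun i hi3 hin => ?_⟩
  have hm : r * w ⟨i - 1, by omega⟩ = ∑ j, w j := by
    apply hmid <;> simp <;> omega
  have : w ⟨i - 1, by omega⟩ = w ⟨2, by omega⟩ :=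
    mul_left_cancel₀ (ne_of_gt hr) (by rw [h2, hm])
  rw [this]; exact hkey
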